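/- Let n, M be positive integers, let rho : R -> R be convex and nonnegative, let Y be a vector in R^n, let lambda > 0, let Phi be an n x M real matrix and Omega an n x n real symmetric matrix such that gamma^T * Omega * gamma > 0 for every nonzero gamma in R^n with Phi^T * gamma = 0. Suppose that the function delta |-> sum_{i=1}^n rho(Y_i - (Phi * delta)_i) has a unique minimizer over R^M. Then the constrained optimization problem of minimizing G(gamma, delta) = (1/n) * sum_{i=1}^n rho(Y_i - (Omega * gamma)_i - (Phi * delta)_i) + lambda * gamma^T * Omega * gamma over all (gamma, delta) in R^n x R^M with Phi^T * gamma = 0 attains its minimum, i.e., there exists a feasible pair (gamma*, delta*) at which G is minimal among all feasible pairs. -/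

import Mathlib

/-!
The objective is continuous on the closed feasible set, so it attains its minimum as soon as one
of its sublevel sets there is bounded. On `ker Φᵀ` the penalty `γᵀ Ω γ` dominates `c ‖γ‖²`, which
bounds `γ`. A convex function with a strict global minimum grows at least linearly (compare it
with its minimum on the unit sphere around the minimizer), so `δ ↦ ∑ ρ (Yᵢ - (Φ δ)ᵢ)` has bounded
sublevel sets. The shift by `Ω γ` is absorbed by convexity: `Y - Φ (δ / 2)` is the midpoint of
`Y - Ω γ - Φ δ` and `Y + Ω γ`, and `∑ ρ (Yᵢ + (Ω γ)ᵢ)` is bounded while `γ` is.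
-/

open Set Bornology Matrix Metric Filter

theorem ContinuousOn.exists_isMinOn_of_isBounded {β : Type*} [PseudoMetricSpace β] [ProperSpace β]
    {f : β → ℝ} {s : Set β} (hf : ContinuousOn f s) (hs : IsClosed s) {x₀ : β} (h₀ : x₀ ∈ s)
    (hb : IsBounded {x ∈ s | f x ≤ f x₀}) : ∃ x ∈ s, IsMinOn f s x := by
  refine hf.exists_isMinOn' hs h₀ ?_
  filter_upwards [mem_inf_of_left hb.isCompact_closure.compl_mem_cocompact,
    mem_inf_of_right (mem_principal_self s)] with x hx hxs
  by_contra! h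
  exact hx (subset_closure ⟨hxs, h.le⟩)

section
variable {E : Type*} [NormedAddCommGroup E] [NormedSpace ℝ E] [FiniteDimensional ℝ E]

theorem ConvexOn.exists_pos_add_mul_norm_sub_le {f : E → ℝ} (hf : ConvexOn ℝ univ f) {x₀ : E}
    (hmin : ∀ x ≠ x₀, f x₀ < f x) :
    ∃ ε > 0, ∀ x, 1 ≤ ‖x - x₀‖ → f x₀ + ε * ‖x - x₀‖ ≤ f x := by
  obtain ⟨a, ha, hsphere⟩ := (isCompact_sphere x₀ 1).exists_forall_le'
    hf.locallyLipschitz.continuous.continuousOn fun y hy =>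
      hmin y (ne_of_mem_sphere hy one_ne_zero)
  refine ⟨a - f x₀, sub_pos.2 ha, fun x hx => ?_⟩
  set t := ‖x - x₀‖
  have ht : 0 < t := one_pos.trans_le hx
  have hmem : (1 - t⁻¹) • x₀ + t⁻¹ • x ∈ sphere x₀ 1 := by
    rw [mem_sphere_iff_norm, show (1 - t⁻¹) • x₀ + t⁻¹ • x - x₀ = t⁻¹ • (x - x₀) by module,
      norm_smul, Real.norm_of_nonneg (inv_nonneg.2 ht.le), inv_mul_cancel₀ ht.ne']
  have key : a ≤ (1 - t⁻¹) * f x₀ + t⁻¹ * f x :=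
    (hsphere _ hmem).trans <| hf.2 (mem_univ x₀) (mem_univ x)
      (sub_nonneg.2 (inv_le_one_of_one_le₀ hx)) (inv_nonneg.2 ht.le) (sub_add_cancel 1 t⁻¹)
  have := mul_le_mul_of_nonneg_left key ht.le
  rw [mul_add, ← mul_assoc, ← mul_assoc, mul_sub, mul_one, mul_inv_cancel₀ ht.ne', one_mul] at this
  linarith

theorem ConvexOn.isBounded_setOf_le_of_forall_lt {f : E → ℝ} (hf : ConvexOn ℝ univ f) {x₀ : E}
    (hmin : ∀ x ≠ x₀, f x₀ < f x) (a : ℝ) : IsBounded {x | f x ≤ a} := by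
  obtain ⟨ε, hε, hgrowth⟩ := hf.exists_pos_add_mul_norm_sub_le hmin
  refine (isBounded_closedBall (x := x₀) (r := max 1 ((a - f x₀) / ε))).subset fun x hx => ?_
  rw [mem_closedBall_iff_norm, le_max_iff, or_iff_not_imp_left, not_le, le_div_iff₀ hε]
  intro h1
  linarith [hgrowth x h1.le, mul_comm ε ‖x - x₀‖, show f x ≤ a from hx]
end

theorem Matrix.exists_pos_mul_sq_norm_le_dotProduct_mulVec {ι : Type*} [Fintype ι]
    {A : Matrix ι ι ℝ} {V : Submodule ℝ (ι → ℝ)} (hA : ∀ x ∈ V, x ≠ 0 → 0 < x ⬝ᵥ (A *ᵥ x)) :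
    ∃ c > 0, ∀ x ∈ V, c * ‖x‖ ^ 2 ≤ x ⬝ᵥ (A *ᵥ x) := by
  obtain ⟨c, hc, hsphere⟩ :=
    ((isCompact_sphere (0 : ι → ℝ) 1).inter_right V.closed_of_finiteDimensional).exists_forall_le'
      (f := fun x => x ⬝ᵥ (A *ᵥ x)) (by fun_prop) fun y hy =>
        hA y hy.2 (ne_of_mem_sphere hy.1 one_ne_zero)
  refine ⟨c, hc, fun x hx => ?_⟩
  rcases eq_or_ne x 0 with rfl | hx0
  · simp
  have hnorm : 0 < ‖x‖ := norm_pos_iff.2 hx0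
  have hmem : ‖x‖⁻¹ • x ∈ sphere 0 1 ∩ V :=
    ⟨by rw [mem_sphere_zero_iff_norm, norm_smul, norm_inv, norm_norm, inv_mul_cancel₀ hnorm.ne'],
      V.smul_mem _ hx⟩
  have := hsphere _ hmem
  simp only [mulVec_smul, smul_dotProduct, dotProduct_smul, smul_eq_mul] at this
  calc c * ‖x‖ ^ 2 ≤ ‖x‖⁻¹ * (‖x‖⁻¹ * (x ⬝ᵥ (A *ᵥ x))) * ‖x‖ ^ 2 := by gcongr
    _ = x ⬝ᵥ (A *ᵥ x) := by field_simp

section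
variable {ι κ ν : Type*} [Fintype ι] [Fintype κ] [Fintype ν] {ρ : ℝ → ℝ}

theorem ConvexOn.sum_comp_sub_mulVec (hρ : ConvexOn ℝ univ ρ) (Y : ι → ℝ) (Φ : Matrix ι κ ℝ) :
    ConvexOn ℝ univ fun δ => ∑ i, ρ (Y i - (Φ *ᵥ δ) i) := by
  refine ⟨convex_univ, fun x _ y _ a b ha hb hab => ?_⟩
  simp only [smul_eq_mul, Finset.mul_sum, ← Finset.sum_add_distrib]
  refine Finset.sum_le_sum fun i _ => le_of_eq_of_le ?_ (hρ.2 trivial trivial ha hb hab)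
  simp only [mulVec_add, mulVec_smul, Pi.add_apply, Pi.smul_apply, smul_eq_mul]
  congr 1
  linear_combination (-Y i) * hab

theorem isBounded_setOf_exists_sum_sub_mulVec_sub_mulVec_le (hρ : ConvexOn ℝ univ ρ)
    (Y : ι → ℝ) (Ω : Matrix ι ν ℝ) (Φ : Matrix ι κ ℝ)
    (hloss : ∀ a, IsBounded {δ | ∑ i, ρ (Y i - (Φ *ᵥ δ) i) ≤ a})
    {B : Set (ν → ℝ)} (hB : IsBounded B) (a : ℝ) :
    IsBounded {δ | ∃ γ ∈ B, ∑ i, ρ (Y i - (Ω *ᵥ γ) i - (Φ *ᵥ δ) i) ≤ a} := by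
  have hcont : Continuous fun γ => ∑ i, ρ (Y i + (Ω *ᵥ γ) i) := by
    have := hρ.locallyLipschitz.continuous
    fun_prop
  obtain ⟨C, hC⟩ := (hB.isCompact_closure.bddAbove_image hcont.continuousOn).mono
    (image_mono subset_closure)
  refine ((hloss ((a + C) / 2)).smul₀ (2 : ℝ)).subset fun δ ⟨γ, hγ, hδ⟩ =>
    ⟨(2 : ℝ)⁻¹ • δ, ?_, by simp [smul_smul]⟩
  have hmid : ∀ i, Y i - (Φ *ᵥ ((2 : ℝ)⁻¹ • δ)) i =
      (2 : ℝ)⁻¹ • (Y i - (Ω *ᵥ γ) i - (Φ *ᵥ δ) i) + (2 : ℝ)⁻¹ • (Y i + (Ω *ᵥ γ) i) := by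
    intro i
    simp only [mulVec_smul, Pi.smul_apply, smul_eq_mul]
    ring
  calc ∑ i, ρ (Y i - (Φ *ᵥ ((2 : ℝ)⁻¹ • δ)) i)
      ≤ ∑ i, ((2 : ℝ)⁻¹ * ρ (Y i - (Ω *ᵥ γ) i - (Φ *ᵥ δ) i) + (2 : ℝ)⁻¹ * ρ (Y i + (Ω *ᵥ γ) i)) :=
        Finset.sum_le_sum fun i _ => (hmid i).symm ▸
          hρ.2 trivial trivial (by norm_num) (by norm_num) (by norm_num)
    _ = (∑ i, ρ (Y i - (Ω *ᵥ γ) i - (Φ *ᵥ δ) i) + ∑ i, ρ (Y i + (Ω *ᵥ γ) i)) / 2 := by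
        rw [Finset.sum_add_distrib, ← Finset.mul_sum, ← Finset.mul_sum]
        ring
    _ ≤ (a + C) / 2 := by gcongr; exact hC (mem_image_of_mem _ hγ)

theorem isBounded_setOf_penalized_loss_le (hρ : ConvexOn ℝ univ ρ) (hnonneg : ∀ x, 0 ≤ ρ x)
    (Y : ι → ℝ) (Ω : Matrix ι ι ℝ) (Φ : Matrix ι κ ℝ) {w lam : ℝ} (hw : 0 < w) (hlam : 0 < lam)
    (hpos : ∀ γ, γ ≠ 0 → Φᵀ *ᵥ γ = 0 → 0 < γ ⬝ᵥ (Ω *ᵥ γ))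
    (hloss : ∀ a, IsBounded {δ | ∑ i, ρ (Y i - (Φ *ᵥ δ) i) ≤ a}) (m : ℝ) :
    IsBounded {p : (ι → ℝ) × (κ → ℝ) | Φᵀ *ᵥ p.1 = 0 ∧
      w * ∑ i, ρ (Y i - (Ω *ᵥ p.1) i - (Φ *ᵥ p.2) i) + lam * (p.1 ⬝ᵥ (Ω *ᵥ p.1)) ≤ m} := by
  obtain ⟨c, hc, hcoer⟩ := exists_pos_mul_sq_norm_le_dotProduct_mulVec
    (V := LinearMap.ker Φᵀ.mulVecLin) fun γ hγ hγ0 => hpos γ hγ0 hγ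
  set Γ := {γ : ι → ℝ | c * ‖γ‖ ^ 2 ≤ m / lam}
  have hΓ : IsBounded Γ := by
    refine (isBounded_closedBall (x := 0) (r := √(m / lam / c))).subset fun γ hγ => ?_
    rw [mem_closedBall_zero_iff]
    have hγ' : c * ‖γ‖ ^ 2 ≤ m / lam := hγ
    exact Real.le_sqrt_of_sq_le ((le_div_iff₀ hc).2 (by linarith))
  refine (hΓ.prod (isBounded_setOf_exists_sum_sub_mulVec_sub_mulVec_le hρ Y Ω Φ hloss hΓ
    (m / w))).subset ?_
  rintro ⟨γ, δ⟩ ⟨hker, hle⟩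
  dsimp only at hker hle
  have hL : 0 ≤ ∑ i, ρ (Y i - (Ω *ᵥ γ) i - (Φ *ᵥ δ) i) := Finset.sum_nonneg fun i _ => hnonneg _
  have hq : c * ‖γ‖ ^ 2 ≤ γ ⬝ᵥ (Ω *ᵥ γ) := hcoer γ hker
  have hq0 : 0 ≤ γ ⬝ᵥ (Ω *ᵥ γ) := (by positivity : 0 ≤ c * ‖γ‖ ^ 2).trans hq
  have hγ : γ ∈ Γ := hq.trans ((le_div_iff₀' hlam).2 (by linarith [mul_nonneg hw.le hL]))
  exact ⟨hγ, γ, hγ, (le_div_iff₀' hw).2 (by linarith [mul_nonneg hlam.le hq0])⟩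
end

theorem representer_problem_attains_minimum_general
    (n M : ℕ) (hn : 0 < n)
    (ρ : ℝ → ℝ) (hconv : ConvexOn ℝ Set.univ ρ) (hnonneg : ∀ x, 0 ≤ ρ x)
    (Y : Fin n → ℝ) (lam : ℝ) (hlam : 0 < lam)
    (Φ : Matrix (Fin n) (Fin M) ℝ) (Ω : Matrix (Fin n) (Fin n) ℝ)
    (hpos : ∀ γ : Fin n → ℝ, γ ≠ 0 → Φ.transpose *ᵥ γ = 0 → 0 < γ ⬝ᵥ (Ω *ᵥ γ))
    (huniq : ∃! δ0 : Fin M → ℝ,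
      ∀ δ : Fin M → ℝ,
        ∑ i, ρ (Y i - (Φ *ᵥ δ0) i) ≤ ∑ i, ρ (Y i - (Φ *ᵥ δ) i)) :
    ∃ γs : Fin n → ℝ, ∃ δs : Fin M → ℝ,
      Φ.transpose *ᵥ γs = 0 ∧
      ∀ γ : Fin n → ℝ, ∀ δ : Fin M → ℝ, Φ.transpose *ᵥ γ = 0 →
        (1 / (n : ℝ)) * ∑ i, ρ (Y i - (Ω *ᵥ γs) i - (Φ *ᵥ δs) i)
            + lam * (γs ⬝ᵥ (Ω *ᵥ γs)) ≤
        (1 / (n : ℝ)) * ∑ i, ρ (Y i - (Ω *ᵥ γ) i - (Φ *ᵥ δ) i)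
            + lam * (γ ⬝ᵥ (Ω *ᵥ γ)) := by
  obtain ⟨δ₀, hδ₀, hδ₀_unique⟩ := huniq
  have hstrict : ∀ δ ≠ δ₀, ∑ i, ρ (Y i - (Φ *ᵥ δ₀) i) < ∑ i, ρ (Y i - (Φ *ᵥ δ) i) :=
    fun δ hδ => (hδ₀ δ).lt_of_ne fun heq => hδ (hδ₀_unique δ fun δ' => heq ▸ hδ₀ δ')
  have hρ : Continuous ρ := hconv.locallyLipschitz.continuous
  obtain ⟨p, hp, hmin⟩ := ContinuousOn.exists_isMinOn_of_isBounded
    (f := fun p : (Fin n → ℝ) × (Fin M → ℝ) => (1 / (n : ℝ)) *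
      ∑ i, ρ (Y i - (Ω *ᵥ p.1) i - (Φ *ᵥ p.2) i) + lam * (p.1 ⬝ᵥ (Ω *ᵥ p.1)))
    (s := {p | Φᵀ *ᵥ p.1 = 0}) (x₀ := (0, δ₀)) (by fun_prop)
    (isClosed_eq (by fun_prop) continuous_const) (by simp)
    (isBounded_setOf_penalized_loss_le hconv hnonneg Y Ω Φ (by positivity) hlam hpos
      ((hconv.sum_comp_sub_mulVec Y Φ).isBounded_setOf_le_of_forall_lt hstrict) _)
  exact ⟨p.1, p.2, hp, fun γ δ hγ => isMinOn_iff.1 hmin (γ, δ) hγ⟩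

/-- Existence of a minimizer for the finite-dimensional representer form
(problem (6)) of the M-type thin-plate spline optimization problem. -/
theorem representer_problem_attains_minimum
    (n M : ℕ) (hn : 0 < n) (hM : 0 < M)
    (ρ : ℝ → ℝ) (hconv : ConvexOn ℝ Set.univ ρ) (hnonneg : ∀ x, 0 ≤ ρ x)
    (Y : Fin n → ℝ) (lam : ℝ) (hlam : 0 < lam)
    (Φ : Matrix (Fin n) (Fin M) ℝ) (Ω : Matrix (Fin n) (Fin n) ℝ)
    (hΩ : Ω.IsSymm)
    (hpos : ∀ γ : Fin n → ℝ, γ ≠ 0 → Φ.transpose *ᵥ γ = 0 → 0 < γ ⬝ᵥ (Ω *ᵥ γ))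
    (huniq : ∃! δ0 : Fin M → ℝ,
      ∀ δ : Fin M → ℝ,
        ∑ i, ρ (Y i - (Φ *ᵥ δ0) i) ≤ ∑ i, ρ (Y i - (Φ *ᵥ δ) i)) :
    ∃ γs : Fin n → ℝ, ∃ δs : Fin M → ℝ,
      Φ.transpose *ᵥ γs = 0 ∧
      ∀ γ : Fin n → ℝ, ∀ δ : Fin M → ℝ, Φ.transpose *ᵥ γ = 0 →
        (1 / (n : ℝ)) * ∑ i, ρ (Y i - (Ω *ᵥ γs) i - (Φ *ᵥ δs) i)
            + lam * (γs ⬝ᵥ (Ω *ᵥ γs)) ≤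
        (1 / (n : ℝ)) * ∑ i, ρ (Y i - (Ω *ᵥ γ) i - (Φ *ᵥ δ) i)
            + lam * (γ ⬝ᵥ (Ω *ᵥ γ)) :=
  representer_problem_attains_minimum_general n M hn ρ hconv hnonneg Y lam hlam Φ Ω hpos huniq
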